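/- Let N be a binary tree-based phylogenetic network and let (a_1, ..., a_k) be an N-fence of length k ≥ 3 in its zig-zag decomposition, ordered so that tail(a_1) is a reticulation. Then every cherry cover of N contains, for each j with 1 ≤ j ≤ (k−1)/2, the reticulated cherry shape consisting of the arcs {head(a_{2j−1})c_{2j−1}, a_{2j}, a_{2j+1}}, where c_{2j−1} denotes the child of head(a_{2j−1}). -/

import Mathlib

namespace PhyloNet

/-- A binary phylogenetic network, encoded on vertex set `verts ⊆ ℕ`. -/
structure Network where
  verts : Finset ℕ
  arc : ℕ → ℕ → Bool
  root : ℕ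
  root_mem : root ∈ verts
  arc_mem : ∀ u v : ℕ, arc u v = true → u ∈ verts ∧ v ∈ verts
  acyclic : ∀ v : ℕ, ¬ Relation.TransGen (fun a b : ℕ => arc a b = true) v v
  root_indeg : (verts.filter fun u => arc u root = true).card = 0
  root_outdeg : (verts.filter fun w => arc root w = true).card = 1
  nonroot_deg : ∀ v ∈ verts, v ≠ root →
    ((verts.filter fun u => arc u v = true).card = 1 ∧
      (verts.filter fun w => arc v w = true).card = 2) ∨
    ((verts.filter fun u => arc u v = true).card = 2 ∧
      (verts.filter fun w => arc v w = true).card = 1) ∨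
    ((verts.filter fun u => arc u v = true).card = 1 ∧
      (verts.filter fun w => arc v w = true).card = 0)

def inDeg (N : Network) (v : ℕ) : ℕ := (N.verts.filter fun u => N.arc u v = true).card

def outDeg (N : Network) (v : ℕ) : ℕ := (N.verts.filter fun w => N.arc v w = true).card

def IsLeaf (N : Network) (v : ℕ) : Prop := v ∈ N.verts ∧ inDeg N v = 1 ∧ outDeg N v = 0

def IsRet (N : Network) (v : ℕ) : Prop := v ∈ N.verts ∧ inDeg N v = 2

def IsTreeVert (N : Network) (v : ℕ) : Prop := v ∈ N.verts ∧ inDeg N v = 1 ∧ outDeg N v = 2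

def IsInternal (N : Network) (v : ℕ) : Prop := v ∈ N.verts ∧ v ≠ N.root ∧ ¬ IsLeaf N v

def IsTree (N : Network) : Prop := ∀ v : ℕ, ¬ IsRet N v

noncomputable def retCount (N : Network) : ℕ := {v : ℕ | IsRet N v}.ncard

/-- Tree-child: every non-leaf vertex has a child that is a tree vertex or a leaf. -/
def IsTreeChild (N : Network) : Prop :=
  ∀ v ∈ N.verts, ¬ IsLeaf N v → ∃ w : ℕ, N.arc v w = true ∧ (IsTreeVert N w ∨ IsLeaf N w)

/-- An omnian: an internal vertex all of whose children are reticulations. -/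
def IsOmnian (N : Network) (v : ℕ) : Prop :=
  IsInternal N v ∧ ∀ w : ℕ, N.arc v w = true → IsRet N w

noncomputable def omnianCount (N : Network) : ℕ := {v : ℕ | IsOmnian N v}.ncard

/-- `N'` is obtained from `N` by adding a leaf to the arc `uv`: the arc is subdivided
by a fresh vertex `w`, and a fresh leaf `x` is attached to `w`. -/
def IsLeafAdditionOn (N N' : Network) (u v : ℕ) : Prop :=
  N.arc u v = true ∧ ∃ w x : ℕ, w ∉ N.verts ∧ x ∉ N.verts ∧ w ≠ x ∧
    N'.verts = insert w (insert x N.verts) ∧ N'.root = N.root ∧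
    ∀ a b : ℕ, (N'.arc a b = true ↔
      ((N.arc a b = true ∧ ¬ (a = u ∧ b = v)) ∨ (a = u ∧ b = w) ∨
        (a = w ∧ b = v) ∨ (a = w ∧ b = x)))

def IsLeafAddition (N N' : Network) : Prop := ∃ u v : ℕ, IsLeafAdditionOn N N' u v

/-- `N'` is obtained from `N` by adding a leaf to a reticulation arc. -/
def IsRetArcLeafAddition (N N' : Network) : Prop :=
  ∃ u v : ℕ, IsRet N v ∧ IsLeafAdditionOn N N' u v

/-- `P` holds after exactly `k` steps of relation `step` starting from `N`. -/
def ReachableBy (step : Network → Network → Prop) (N : Network) (k : ℕ)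
    (P : Network → Prop) : Prop :=
  ∃ M : ℕ → Network, M 0 = N ∧ (∀ i : ℕ, i < k → step (M i) (M (i + 1))) ∧ P (M k)

/-- The minimum number of leaf additions needed to bring `N` into the class `P`. -/
noncomputable def leafAddDist (P : Network → Prop) (N : Network) : ℕ :=
  sInf {k : ℕ | ReachableBy IsLeafAddition N k P}

noncomputable def LTC (N : Network) : ℕ := leafAddDist IsTreeChild N

/-- Reduction of a cherry (x,y): delete the leaf x and suppress its parent p
(whose own parent is q, gaining the arc q → y). -/
def ReducesCherry (N N' : Network) (x y : ℕ) : Prop :=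
  ∃ p q : ℕ, IsLeaf N x ∧ IsLeaf N y ∧ x ≠ y ∧
    N.arc p x = true ∧ N.arc p y = true ∧ N.arc q p = true ∧
    N'.verts = (N.verts.erase x).erase p ∧ N'.root = N.root ∧
    ∀ a b : ℕ, (N'.arc a b = true ↔
      (N.arc a b = true ∧ a ≠ p ∧ b ≠ p ∧ b ≠ x) ∨ (a = q ∧ b = y))

/-- Reduction of a reticulated cherry (x,y): delete the arc from the parent p_y of y
to the reticulation parent p_x of x, and clean up (suppressing p_x and p_y). -/
def ReducesRetCherry (N N' : Network) (x y : ℕ) : Prop :=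
  ∃ px py z q : ℕ, IsLeaf N x ∧ IsLeaf N y ∧ IsRet N px ∧
    N.arc px x = true ∧ N.arc py px = true ∧ N.arc py y = true ∧
    N.arc z px = true ∧ z ≠ py ∧ N.arc q py = true ∧
    N'.verts = (N.verts.erase px).erase py ∧ N'.root = N.root ∧
    ∀ a b : ℕ, (N'.arc a b = true ↔
      (N.arc a b = true ∧ a ≠ px ∧ a ≠ py ∧ b ≠ px ∧ b ≠ py) ∨
        (a = z ∧ b = x) ∨ (a = q ∧ b = y))

def CherryStep (N N' : Network) : Prop :=
  ∃ x y : ℕ, ReducesCherry N N' x y ∨ ReducesRetCherry N N' x y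

/-- A network consisting of the root and a single leaf. -/
def IsSingleLeaf (N : Network) : Prop := ∃ x : ℕ, x ≠ N.root ∧ N.verts = {N.root, x}

/-- Orchard: reducible to a single leaf by cherry and reticulated cherry reductions. -/
def IsOrchard (N : Network) : Prop :=
  ∃ N' : Network, Relation.ReflTransGen CherryStep N N' ∧ IsSingleLeaf N'

noncomputable def LOR (N : Network) : ℕ := leafAddDist IsOrchard N

/-- Tree-based: there is a spanning tree (a choice of one incoming arc for each
non-root vertex) all of whose leaves are leaves of `N`. -/
def IsTreeBased (N : Network) : Prop :=
  ∃ T : ℕ → ℕ → Bool, (∀ u v : ℕ, T u v = true → N.arc u v = true) ∧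
    (∀ v ∈ N.verts, v ≠ N.root → (N.verts.filter fun u => T u v = true).card = 1) ∧
    (∀ v ∈ N.verts, ¬ IsLeaf N v → ∃ w : ℕ, T v w = true)

noncomputable def LTB (N : Network) : ℕ := leafAddDist IsTreeBased N

/-- A zig-zag trail: a nonempty duplicate-free sequence of arcs in which
consecutive arcs share a tail or share a head. -/
def IsZigZag (N : Network) (s : List (ℕ × ℕ)) : Prop :=
  s ≠ [] ∧ s.Nodup ∧ (∀ a ∈ s, N.arc a.1 a.2 = true) ∧
    List.Chain' (fun a b : ℕ × ℕ => a.1 = b.1 ∨ a.2 = b.2) s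

def IsMaximalZigZag (N : Network) (s : List (ℕ × ℕ)) : Prop :=
  IsZigZag N s ∧ ∀ t : List (ℕ × ℕ), IsZigZag N t → s.Sublist t → t.length = s.length

/-- A W-fence: a maximal zig-zag trail of even length whose two end-arc tails
are both reticulations. -/
def IsWFence (N : Network) (s : List (ℕ × ℕ)) : Prop :=
  IsMaximalZigZag N s ∧ s.length % 2 = 0 ∧ 2 ≤ s.length ∧
    IsRet N (s.headD (0, 0)).1 ∧ IsRet N (s.getLastD (0, 0)).1

/-- An N-fence: a maximal zig-zag trail of odd length exactly one of whose
end-arc tails is a reticulation. -/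
def IsNFence (N : Network) (s : List (ℕ × ℕ)) : Prop :=
  IsMaximalZigZag N s ∧ s.length % 2 = 1 ∧
    Xor' (IsRet N (s.headD (0, 0)).1) (IsRet N (s.getLastD (0, 0)).1)

/-- A zig-zag decomposition: a set of maximal zig-zag trails partitioning the
non-root arcs of the network. -/
def IsZigZagDecomposition (N : Network) (D : Set (List (ℕ × ℕ))) : Prop :=
  (∀ s ∈ D, IsMaximalZigZag N s) ∧
  (∀ s ∈ D, ∀ p ∈ s, p.1 ≠ N.root) ∧
  (∀ a b : ℕ, N.arc a b = true → a ≠ N.root → ∃! s : List (ℕ × ℕ), s ∈ D ∧ (a, b) ∈ s)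

/-- A cherry shape: two arcs with a common tail. -/
def IsCherryShape (N : Network) (s : Set (ℕ × ℕ)) : Prop :=
  ∃ p x y : ℕ, x ≠ y ∧ N.arc p x = true ∧ N.arc p y = true ∧
    s = {(p, x), (p, y)}

/-- A reticulated cherry shape: arcs p_x x, p_y p_x, p_y y where p_x is a reticulation;
its middle arc is p_y p_x. -/
def IsRetCherryShape (N : Network) (s : Set (ℕ × ℕ)) : Prop :=
  ∃ x y px py : ℕ, IsRet N px ∧ N.arc px x = true ∧ N.arc py px = true ∧
    N.arc py y = true ∧ y ≠ px ∧ s = {(px, x), (py, px), (py, y)}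

/-- `s` is a reticulated cherry shape with middle arc `(u, r)`. -/
def IsMiddleArcOf (N : Network) (s : Set (ℕ × ℕ)) (u r : ℕ) : Prop :=
  ∃ x y : ℕ, IsRet N r ∧ N.arc r x = true ∧ N.arc u r = true ∧ N.arc u y = true ∧
    y ≠ r ∧ s = {(r, x), (u, r), (u, y)}

/-- A cherry cover: cherry shapes and reticulated cherry shapes covering every
non-root arc exactly once. -/
def IsCherryCover (N : Network) (P : Set (Set (ℕ × ℕ))) : Prop :=
  (∀ s ∈ P, IsCherryShape N s ∨ IsRetCherryShape N s) ∧
  (∀ a b : ℕ, N.arc a b = true → a ≠ N.root →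
    ∃! s : Set (ℕ × ℕ), s ∈ P ∧ (a, b) ∈ s)

/-- The internal vertices of a shape are the tails of its arcs. -/
def shapeInternals (s : Set (ℕ × ℕ)) : Set ℕ := {p : ℕ | ∃ x : ℕ, (p, x) ∈ s}

/-- The endpoints of a shape: heads of its arcs that are not tails of its arcs. -/
def shapeEndpoints (s : Set (ℕ × ℕ)) : Set ℕ :=
  {x : ℕ | (∃ p : ℕ, (p, x) ∈ s) ∧ ∀ y : ℕ, (x, y) ∉ s}

/-- In the auxiliary graph, shape `B` is directly above shape `C` if an internal
vertex of `C` is an endpoint of `B`. -/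
def DirectlyAbove (B C : Set (ℕ × ℕ)) : Prop :=
  ∃ v : ℕ, v ∈ shapeEndpoints B ∧ v ∈ shapeInternals C

/-- The auxiliary graph of the cherry cover `P` contains a directed cycle. -/
def HasCyclicAux (P : Set (Set (ℕ × ℕ))) : Prop :=
  ∃ s ∈ P, Relation.TransGen
    (fun B C : Set (ℕ × ℕ) => B ∈ P ∧ C ∈ P ∧ DirectlyAbove B C) s s

/-- A non-temporal labelling of `N`. -/
def IsNonTemporal (N : Network) (t : ℕ → ℝ) : Prop :=
  (∀ u v : ℕ, N.arc u v = true → t u ≤ t v) ∧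
  (∀ u v : ℕ, N.arc u v = true → t u = t v → IsRet N v) ∧
  (∀ u : ℕ, IsInternal N u → ∃ v : ℕ, N.arc u v = true ∧ t u < t v) ∧
  (∀ r u v : ℕ, IsRet N r → N.arc u r = true → N.arc v r = true → u ≠ v →
    ¬ (t u = t r ∧ t v = t r))

/-- An inret: a reticulation with no incoming horizontal arc
(i.e. both incoming arcs vertical). -/
def Inret (N : Network) (t : ℕ → ℝ) (r : ℕ) : Prop :=
  IsRet N r ∧ ∀ u : ℕ, N.arc u r = true → t u ≠ t r

noncomputable def inretCount (N : Network) (t : ℕ → ℝ) : ℕ := {r : ℕ | Inret N t r}.ncard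

/-- HGT-consistent labelling: a non-temporal labelling in which every reticulation
has exactly one incoming horizontal arc. -/
def IsHGTConsistent (N : Network) (t : ℕ → ℝ) : Prop :=
  IsNonTemporal N t ∧ ∀ r : ℕ, IsRet N r → ∃! u : ℕ, N.arc u r = true ∧ t u = t r

/-- V_OR: the minimum number of inrets over all non-temporal labellings. -/
noncomputable def VOR (N : Network) : ℕ :=
  sInf {k : ℕ | ∃ t : ℕ → ℝ, IsNonTemporal N t ∧ inretCount N t = k}

/-- The network `N` is the result of the vertex-cover reduction applied to `G`. -/
def IsVCReduction {α : Type} [Fintype α] [DecidableEq α] (G : SimpleGraph α)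
    (N : Network) : Prop :=
  ∃ (R W L M : α → ℕ → ℕ) (P : α → ℕ) (S : ℕ → ℕ) (rho : ℕ)
    (e : ℕ → α) (pi tau : α → α → ℕ),
    (∀ v : α, ∃! i : ℕ, 1 ≤ i ∧ i ≤ Fintype.card α ∧ e i = v) ∧
    (∀ v u : α, G.Adj v u → pi v u ∈ ({1, 2, 3} : Set ℕ)) ∧
    (∀ v u u' : α, G.Adj v u → G.Adj v u' → pi v u = pi v u' → u = u') ∧
    (∀ v u : α, G.Adj v u → tau v u ∈ ({5, 6, 7} : Set ℕ)) ∧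
    (∀ v u u' : α, G.Adj v u → G.Adj v u' → tau v u = tau v u' → u = u') ∧
    Function.Injective
      (fun z : (α × Fin 8) ⊕ (α × Fin 7) ⊕ (α × Fin 5) ⊕ (α × Fin 4) ⊕ α ⊕
          (Fin (Fintype.card α - 1)) ⊕ Unit =>
        match z with
        | Sum.inl (v, i) => R v i.1
        | Sum.inr (Sum.inl (v, i)) => W v (i.1 + 1)
        | Sum.inr (Sum.inr (Sum.inl (v, i))) => L v (i.1 + 1)
        | Sum.inr (Sum.inr (Sum.inr (Sum.inl (v, i)))) => M v (i.1 + 1)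
        | Sum.inr (Sum.inr (Sum.inr (Sum.inr (Sum.inl v)))) => P v
        | Sum.inr (Sum.inr (Sum.inr (Sum.inr (Sum.inr (Sum.inl i))))) => S (i.1 + 1)
        | Sum.inr (Sum.inr (Sum.inr (Sum.inr (Sum.inr (Sum.inr _))))) => rho) ∧
    N.root = rho ∧
    (∀ x : ℕ, x ∈ N.verts ↔
      (∃ v i, i ≤ 7 ∧ x = R v i) ∨ (∃ v i, 1 ≤ i ∧ i ≤ 7 ∧ x = W v i) ∨
      (∃ v i, 1 ≤ i ∧ i ≤ 5 ∧ x = L v i) ∨ (∃ v i, 1 ≤ i ∧ i ≤ 4 ∧ x = M v i) ∨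
      (∃ v, x = P v) ∨ (∃ i, 1 ≤ i ∧ i ≤ Fintype.card α - 1 ∧ x = S i) ∨ x = rho) ∧
    (∀ a b : ℕ, N.arc a b = true ↔
      (a = rho ∧ b = S 1) ∨
      (∃ i, 1 ≤ i ∧ i ≤ Fintype.card α - 2 ∧ a = S i ∧ b = S (i + 1)) ∨
      (∃ i, 1 ≤ i ∧ i ≤ Fintype.card α - 1 ∧ a = S i ∧ b = P (e i)) ∨
      (a = S (Fintype.card α - 1) ∧ b = P (e (Fintype.card α))) ∨
      (∃ v, a = P v ∧ (b = M v 4 ∨ b = W v 7)) ∨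
      (∃ v, a = M v 4 ∧ (b = M v 3 ∨ b = R v 0)) ∨
      (∃ v, a = M v 3 ∧ (b = M v 2 ∨ b = W v 6)) ∨
      (∃ v, a = M v 2 ∧ (b = M v 1 ∨ b = W v 5)) ∨
      (∃ v, a = M v 1 ∧ (b = R v 0 ∨ b = W v 4)) ∨
      (∃ v, a = R v 0 ∧ b = R v 1) ∨
      (∃ v i, 1 ≤ i ∧ i ≤ 6 ∧ a = W v i ∧ (b = R v i ∨ b = R v (i + 1))) ∨
      (∃ v, a = W v 7 ∧ (b = R v 7 ∨ b = L v 5)) ∨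
      (∃ v i, 1 ≤ i ∧ i ≤ 4 ∧ a = R v i ∧ b = L v i) ∨
      (∃ u v, G.Adj u v ∧ a = R u (tau u v) ∧ b = W v (pi v u)))


/-!
Along the trail `(v₀, x₀), (u₀, x₀), (u₀, y₀) = (v₁, x₁), (u₁, x₁), …` the degree bounds force
heads and tails to alternate, so every `xₘ` is a reticulation with parents `vₘ ≠ uₘ`. The arc
out of `xₘ` can only be covered by a reticulated cherry shape whose middle arc is `(vₘ, xₘ)` or
`(uₘ, xₘ)`. The first option is excluded by induction on `m`: for `m = 0` because the
reticulation `v₀` has a single child, and afterwards because the arc `(vₘ, xₘ) = (uₘ₋₁, yₘ₋₁)`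
already lies in the forced shape at `xₘ₋₁`, which does not contain the arc out of `xₘ`.
-/

variable {N : Network}

namespace Network

lemma ne_of_arc {u v : ℕ} (h : N.arc u v = true) : u ≠ v := by
  rintro rfl
  exact N.acyclic u (.single h)

lemma mem_parents {u v : ℕ} (h : N.arc u v = true) :
    u ∈ N.verts.filter fun w => N.arc w v = true :=
  Finset.mem_filter.2 ⟨(N.arc_mem u v h).1, h⟩

lemma mem_children {u v : ℕ} (h : N.arc u v = true) :
    v ∈ N.verts.filter fun w => N.arc u w = true :=
  Finset.mem_filter.2 ⟨(N.arc_mem u v h).2, h⟩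

lemma inDeg_le_two (v : ℕ) : inDeg N v ≤ 2 := by
  by_cases hv : v ∈ N.verts
  · by_cases hr : v = N.root
    · subst hr
      exact N.root_indeg.trans_le (Nat.zero_le 2)
    · rcases N.nonroot_deg v hv hr with ⟨h, -⟩ | ⟨h, -⟩ | ⟨h, -⟩ <;> simp [inDeg, h]
  · have : inDeg N v = 0 :=
      Finset.card_eq_zero.2 (Finset.filter_eq_empty_iff.2 fun u _ h => hv (N.arc_mem u v h).2)
    omega

lemma outDeg_le_two (v : ℕ) : outDeg N v ≤ 2 := by
  by_cases hv : v ∈ N.verts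
  · by_cases hr : v = N.root
    · subst hr
      exact N.root_outdeg.trans_le one_le_two
    · rcases N.nonroot_deg v hv hr with ⟨-, h⟩ | ⟨-, h⟩ | ⟨-, h⟩ <;> simp [outDeg, h]
  · have : outDeg N v = 0 :=
      Finset.card_eq_zero.2 (Finset.filter_eq_empty_iff.2 fun w _ h => hv (N.arc_mem v w h).1)
    omega

lemma parent_eq_or_eq_of_ne {u₁ u₂ u v : ℕ} (h₁ : N.arc u₁ v = true) (h₂ : N.arc u₂ v = true)
    (hne : u₁ ≠ u₂) (h : N.arc u v = true) : u = u₁ ∨ u = u₂ := by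
  by_contra! hu
  exact (inDeg_le_two v).not_gt <| Finset.two_lt_card.2
    ⟨u₁, mem_parents h₁, u₂, mem_parents h₂, u, mem_parents h, hne, hu.1.symm, hu.2.symm⟩

lemma child_eq_or_eq_of_ne {v w₁ w₂ w : ℕ} (h₁ : N.arc v w₁ = true) (h₂ : N.arc v w₂ = true)
    (hne : w₁ ≠ w₂) (h : N.arc v w = true) : w = w₁ ∨ w = w₂ := by
  by_contra! hw
  exact (outDeg_le_two v).not_gt <| Finset.two_lt_card.2
    ⟨w₁, mem_children h₁, w₂, mem_children h₂, w, mem_children h, hne, hw.1.symm, hw.2.symm⟩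

lemma isRet_of_parents_ne {u₁ u₂ v : ℕ} (h₁ : N.arc u₁ v = true) (h₂ : N.arc u₂ v = true)
    (hne : u₁ ≠ u₂) : IsRet N v :=
  ⟨(N.arc_mem u₁ v h₁).2, le_antisymm (inDeg_le_two v)
    (Finset.one_lt_card.2 ⟨u₁, mem_parents h₁, u₂, mem_parents h₂, hne⟩)⟩

lemma ne_root_of_children_ne {v w₁ w₂ : ℕ} (h₁ : N.arc v w₁ = true) (h₂ : N.arc v w₂ = true)
    (hne : w₁ ≠ w₂) : v ≠ N.root := by
  rintro rfl
  have := Finset.one_lt_card.2 ⟨w₁, mem_children h₁, w₂, mem_children h₂, hne⟩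
  rw [N.root_outdeg] at this
  exact this.false

end Network

open Network

lemma IsRet.ne_root {v : ℕ} (hv : IsRet N v) : v ≠ N.root := by
  rintro rfl
  have := hv.2
  rw [inDeg, N.root_indeg] at this
  exact absurd this (by norm_num)

lemma IsRet.outDeg_eq_one {v : ℕ} (hv : IsRet N v) : outDeg N v = 1 := by
  rcases N.nonroot_deg v hv.1 hv.ne_root with ⟨h, -⟩ | ⟨-, h⟩ | ⟨h, -⟩
  · exact absurd hv.2 (by simp [inDeg, h])
  · exact h
  · exact absurd hv.2 (by simp [inDeg, h])

lemma IsRet.exists_child {v : ℕ} (hv : IsRet N v) : ∃ w, N.arc v w = true := by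
  obtain ⟨w, hw⟩ := Finset.card_eq_one.1 hv.outDeg_eq_one
  have hmem : w ∈ N.verts.filter fun w => N.arc v w = true := hw ▸ Finset.mem_singleton_self w
  exact ⟨w, (Finset.mem_filter.1 hmem).2⟩

lemma IsRet.child_eq {v w₁ w₂ : ℕ} (hv : IsRet N v) (h₁ : N.arc v w₁ = true)
    (h₂ : N.arc v w₂ = true) : w₁ = w₂ :=
  Finset.card_le_one.1 hv.outDeg_eq_one.le _ (mem_children h₁) _ (mem_children h₂)

section CherryCover

variable {P : Set (Set (ℕ × ℕ))}

lemma IsCherryCover.eq_of_mem (hP : IsCherryCover N P) {a b : ℕ} (hab : N.arc a b = true)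
    (ha : a ≠ N.root) {S T : Set (ℕ × ℕ)} (hS : S ∈ P) (hT : T ∈ P) (haS : (a, b) ∈ S)
    (haT : (a, b) ∈ T) : S = T :=
  (hP.2 a b hab ha).unique ⟨hS, haS⟩ ⟨hT, haT⟩

lemma IsCherryCover.exists_retCherry_of_isRet (hP : IsCherryCover N P) {x c : ℕ}
    (hx : IsRet N x) (hxc : N.arc x c = true) :
    ∃ p y, N.arc p x = true ∧ N.arc p y = true ∧ y ≠ x ∧
      ({(x, c), (p, x), (p, y)} : Set (ℕ × ℕ)) ∈ P := by
  obtain ⟨T, ⟨hT, hxcT⟩, -⟩ := hP.2 x c hxc hx.ne_root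
  rcases hP.1 T hT with ⟨p, y, z, hyz, hpy, hpz, rfl⟩ |
    ⟨x', y, px, py, -, hpx, hpypx, hpyy, hypx, rfl⟩
  · simp only [Set.mem_insert_iff, Set.mem_singleton_iff, Prod.mk.injEq] at hxcT
    obtain rfl : x = p := by rcases hxcT with ⟨h, -⟩ | ⟨h, -⟩ <;> exact h
    exact absurd (hx.child_eq hpy hpz) hyz
  · simp only [Set.mem_insert_iff, Set.mem_singleton_iff, Prod.mk.injEq] at hxcT
    rcases hxcT with ⟨rfl, rfl⟩ | ⟨rfl, -⟩ | ⟨rfl, -⟩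
    · exact ⟨py, y, hpypx, hpyy, hypx, hT⟩
    · exact absurd (hx.child_eq hpyy hpypx) hypx
    · exact absurd (hx.child_eq hpyy hpypx) hypx

lemma IsCherryCover.retCherry_mem_of_not_middle (hP : IsCherryCover N P) {v u x y c : ℕ}
    (hvx : N.arc v x = true) (hux : N.arc u x = true) (huy : N.arc u y = true) (hvu : v ≠ u)
    (hxy : x ≠ y) (hxc : N.arc x c = true)
    (hv : ∀ y', N.arc v y' = true → y' ≠ x →
      ({(x, c), (v, x), (v, y')} : Set (ℕ × ℕ)) ∉ P) :
    ({(x, c), (u, x), (u, y)} : Set (ℕ × ℕ)) ∈ P := by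
  obtain ⟨p, y', hpx, hpy', hy'x, hT⟩ :=
    hP.exists_retCherry_of_isRet (isRet_of_parents_ne hvx hux hvu) hxc
  rcases parent_eq_or_eq_of_ne hvx hux hvu hpx with rfl | rfl
  · exact absurd hT (hv y' hpy' hy'x)
  · rcases child_eq_or_eq_of_ne hux huy hxy hpy' with rfl | rfl
    · exact absurd rfl hy'x
    · exact hT

end CherryCover

section ZigZag

variable {s : List (ℕ × ℕ)}

lemma IsZigZag.arc_getD (hz : IsZigZag N s) {i : ℕ} (hi : i < s.length) :
    N.arc (s.getD i (0, 0)).1 (s.getD i (0, 0)).2 = true := by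
  rw [List.getD_eq_getElem _ _ hi]
  exact hz.2.2.1 _ (List.getElem_mem hi)

lemma IsZigZag.getD_ne (hz : IsZigZag N s) {i k : ℕ} (hi : i < s.length) (hk : k < s.length)
    (hik : i ≠ k) : s.getD i (0, 0) ≠ s.getD k (0, 0) := by
  rw [List.getD_eq_getElem _ _ hi, List.getD_eq_getElem _ _ hk]
  exact fun h => hik (hz.2.1.getElem_inj_iff.1 h)

lemma IsZigZag.getD_link (hz : IsZigZag N s) {i : ℕ} (hi : i + 1 < s.length) :
    (s.getD i (0, 0)).1 = (s.getD (i + 1) (0, 0)).1 ∨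
      (s.getD i (0, 0)).2 = (s.getD (i + 1) (0, 0)).2 := by
  rw [List.getD_eq_getElem _ _ (by omega), List.getD_eq_getElem _ _ hi]
  exact List.isChain_iff_getElem.1 hz.2.2.2 i hi

lemma IsZigZag.tail_eq_of_head_eq (hz : IsZigZag N s) {i : ℕ} (hi : i + 2 < s.length)
    (h : (s.getD i (0, 0)).2 = (s.getD (i + 1) (0, 0)).2) :
    (s.getD (i + 1) (0, 0)).1 = (s.getD (i + 2) (0, 0)).1 := by
  refine (hz.getD_link hi).resolve_right fun h' => ?_
  have h₀ := hz.arc_getD (i := i) (by omega)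
  have h₁ := h ▸ hz.arc_getD (i := i + 1) (by omega)
  have h₂ := h ▸ h' ▸ hz.arc_getD hi
  have hne : (s.getD i (0, 0)).1 ≠ (s.getD (i + 1) (0, 0)).1 := fun ht =>
    hz.getD_ne (by omega) (by omega) (by omega) (Prod.ext ht h)
  rcases parent_eq_or_eq_of_ne h₀ h₁ hne h₂ with ht | ht
  · exact hz.getD_ne hi (by omega) (by omega) (Prod.ext ht (h.trans h').symm)
  · exact hz.getD_ne hi (by omega) (by omega) (Prod.ext ht h'.symm)

lemma IsZigZag.head_eq_of_tail_eq (hz : IsZigZag N s) {i : ℕ} (hi : i + 2 < s.length)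
    (h : (s.getD i (0, 0)).1 = (s.getD (i + 1) (0, 0)).1) :
    (s.getD (i + 1) (0, 0)).2 = (s.getD (i + 2) (0, 0)).2 := by
  refine (hz.getD_link hi).resolve_left fun h' => ?_
  have h₀ := hz.arc_getD (i := i) (by omega)
  have h₁ := h ▸ hz.arc_getD (i := i + 1) (by omega)
  have h₂ := h ▸ h' ▸ hz.arc_getD hi
  have hne : (s.getD i (0, 0)).2 ≠ (s.getD (i + 1) (0, 0)).2 := fun hh =>
    hz.getD_ne (by omega) (by omega) (by omega) (Prod.ext h hh)
  rcases child_eq_or_eq_of_ne h₀ h₁ hne h₂ with hh | hh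
  · exact hz.getD_ne hi (by omega) (by omega) (Prod.ext (h.trans h').symm hh)
  · exact hz.getD_ne hi (by omega) (by omega) (Prod.ext h'.symm hh)

variable (hord : IsRet N (s.headD (0, 0)).1)
include hord

lemma IsZigZag.head_eq_of_even (hz : IsZigZag N s) :
    ∀ m, 2 * m + 1 < s.length →
      (s.getD (2 * m) (0, 0)).2 = (s.getD (2 * m + 1) (0, 0)).2
  | 0, hm => by
    rw [List.headD_eq_getD] at hord
    refine (hz.getD_link hm).resolve_left fun ht => hz.getD_ne (i := 0) (k := 1) (by omega) hm
      (by omega) (Prod.ext ht (hord.child_eq (hz.arc_getD (by omega)) ?_))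
    exact ht ▸ hz.arc_getD hm
  | m + 1, hm =>
    hz.head_eq_of_tail_eq (i := 2 * m + 1) hm
      (hz.tail_eq_of_head_eq (by omega) (hz.head_eq_of_even m (by omega)))

lemma IsZigZag.exists_nShape (hz : IsZigZag N s) {m : ℕ} (hm : 2 * m + 2 < s.length) :
    ∃ v x u y, s.getD (2 * m) (0, 0) = (v, x) ∧ s.getD (2 * m + 1) (0, 0) = (u, x) ∧
      s.getD (2 * m + 2) (0, 0) = (u, y) ∧ v ≠ u ∧ x ≠ y ∧
      N.arc v x = true ∧ N.arc u x = true ∧ N.arc u y = true := by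
  have hhead := hz.head_eq_of_even hord m (by omega)
  have htail := hz.tail_eq_of_head_eq hm hhead
  refine ⟨(s.getD (2 * m) (0, 0)).1, (s.getD (2 * m) (0, 0)).2, (s.getD (2 * m + 1) (0, 0)).1,
    (s.getD (2 * m + 2) (0, 0)).2, rfl, Prod.ext rfl hhead.symm, Prod.ext htail.symm rfl,
    fun h => ?_, fun h => ?_, hz.arc_getD (by omega), hhead ▸ hz.arc_getD (by omega),
    htail ▸ hz.arc_getD hm⟩
  · exact hz.getD_ne (by omega) (by omega) (by omega) (Prod.ext h hhead)
  · exact hz.getD_ne (i := 2 * m + 1) (by omega) hm (by omega)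
      (Prod.ext htail (hhead.symm.trans h))

theorem IsCherryCover.retCherry_mem_of_isZigZag {P : Set (Set (ℕ × ℕ))}
    (hP : IsCherryCover N P) (hz : IsZigZag N s) :
    ∀ m, 2 * m + 2 < s.length → ∀ c, N.arc (s.getD (2 * m) (0, 0)).2 c = true →
      ({((s.getD (2 * m) (0, 0)).2, c), s.getD (2 * m + 1) (0, 0), s.getD (2 * m + 2) (0, 0)} :
        Set (ℕ × ℕ)) ∈ P := by
  intro m hm c hc
  obtain ⟨v, x, u, y, h₀, h₁, h₂, hvu, hxy, hvx, hux, huy⟩ := hz.exists_nShape hord hm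
  rw [h₀] at hc ⊢
  rw [h₁, h₂]
  refine hP.retCherry_mem_of_not_middle hvx hux huy hvu hxy hc ?_
  cases m with
  | zero =>
    rw [List.headD_eq_getD, h₀] at hord
    exact fun y' hvy' hy'x _ => hy'x (hord.child_eq hvy' hvx)
  | succ m =>
    intro y' _ _ hT
    obtain ⟨v', x', u', y'', g₀, g₁, g₂, hvu', hxy', hvx', hux', -⟩ :=
      hz.exists_nShape hord (m := m) (by omega)
    obtain ⟨rfl, rfl⟩ : v = u' ∧ x = y'' := by
      rw [show 2 * (m + 1) = 2 * m + 2 by ring, g₂] at h₀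
      exact ⟨(Prod.mk.inj h₀).1.symm, (Prod.mk.inj h₀).2.symm⟩
    obtain ⟨c', hc'⟩ := (isRet_of_parents_ne hvx' hux' hvu').exists_child
    have hS := hP.retCherry_mem_of_isZigZag hz m (by omega) c' (by rw [g₀]; exact hc')
    rw [g₀, g₁, g₂] at hS
    have hST := hP.eq_of_mem hvx (ne_root_of_children_ne hux' hvx hxy') hS hT
      (by simp) (by simp)
    have hxc : ((x, c) : ℕ × ℕ) ∈ ({(x', c'), (v, x'), (v, x)} : Set (ℕ × ℕ)) :=
      hST ▸ by simp
    simp only [Set.mem_insert_iff, Set.mem_singleton_iff, Prod.mk.injEq] at hxc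
    rcases hxc with ⟨rfl, -⟩ | ⟨rfl, -⟩ | ⟨rfl, -⟩
    · exact hxy' rfl
    · exact ne_of_arc hvx rfl
    · exact ne_of_arc hvx rfl

end ZigZag

/-- Lists are 0-indexed: the paper's arc `a_m` is entry `m - 1` of `s`. -/
theorem nfence_forced_shapes_general (N : Network)
    (s : List (ℕ × ℕ)) (hN : IsNFence N s)
    (hord : IsRet N ((s.headD (0, 0)).1))
    (P : Set (Set (ℕ × ℕ))) (hP : IsCherryCover N P) :
    ∀ j : ℕ, 1 ≤ j → 2 * j + 1 ≤ s.length →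
      ∀ c : ℕ, N.arc (s.getD (2 * j - 2) (0, 0)).2 c = true →
        ({((s.getD (2 * j - 2) (0, 0)).2, c), s.getD (2 * j - 1) (0, 0),
            s.getD (2 * j) (0, 0)} : Set (ℕ × ℕ)) ∈ P := by
  rintro j hj hlen c hc
  obtain ⟨m, rfl⟩ : ∃ m, j = m + 1 := ⟨j - 1, by omega⟩
  have hidx : 2 * (m + 1) - 2 = 2 * m ∧ 2 * (m + 1) - 1 = 2 * m + 1 ∧ 2 * (m + 1) = 2 * m + 2 :=
    ⟨by omega, by omega, by omega⟩
  rw [hidx.1] at hc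
  rw [hidx.1, hidx.2.1, hidx.2.2]
  exact hP.retCherry_mem_of_isZigZag hord hN.1.1 m (by omega) c hc

/-- In a tree-based network, for an N-fence `(a_1, ..., a_k)` of
length `k ≥ 3` (ordered so that `tail a_1` is a reticulation), every cherry cover
contains the reticulated cherry shapes `{head(a_{2j-1}) c_{2j-1}, a_{2j}, a_{2j+1}}`
where `c_{2j-1}` is the child of `head(a_{2j-1})`. (Lists are 0-indexed: `a_m` is
entry `m - 1`.) -/
theorem nfence_forced_shapes (N : Network) (hTB : IsTreeBased N)
    (s : List (ℕ × ℕ)) (hN : IsNFence N s)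
    (hord : IsRet N ((s.headD (0, 0)).1)) (hlen : 3 ≤ s.length)
    (P : Set (Set (ℕ × ℕ))) (hP : IsCherryCover N P) :
    ∀ j : ℕ, 1 ≤ j → 2 * j + 1 ≤ s.length →
      ∀ c : ℕ, N.arc (s.getD (2 * j - 2) (0, 0)).2 c = true →
        ({((s.getD (2 * j - 2) (0, 0)).2, c), s.getD (2 * j - 1) (0, 0),
            s.getD (2 * j) (0, 0)} : Set (ℕ × ℕ)) ∈ P :=
  nfence_forced_shapes_general N s hN hord P hP

end PhyloNet
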